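/- Derivative identity for a rotating frame: let φ, θ, ψ : ℝ → ℝ be differentiable at t₀ and write Ω(t) = (φ(t), θ(t), ψ(t)). Then the matrix-valued map t ↦ R(Ω(t)) is differentiable at t₀ and its derivative there equals R(Ω(t₀)) · M, where M = −i(φ'(t₀) cos θ(t₀) + ψ'(t₀)) S₃ + (1/2)( i φ'(t₀) sin θ(t₀) − θ'(t₀) ) e^{iψ(t₀)} S₊ + (1/2)( i φ'(t₀) sin θ(t₀) + θ'(t₀) ) e^{−iψ(t₀)} S₋. -/

import Mathlib

/-!
Only the commutation relations `⁅S₃, S₊⁆ = S₊`, `⁅S₃, S₋⁆ = -S₋`, `⁅S₊, S₋⁆ = 2 S₃` matter, so the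
computation is done in an arbitrary complex Banach algebra. By the product rule the derivative of
`exp(-iφS₃) exp(-iθS₂) exp(-iψS₃)` is a sum of three terms, each with one generator wedged between
the exponentials; it is moved to the right end using that an eigenvector `B` of `ad A`
(`⁅A, B⁆ = c B`) satisfies `B exp(zA) = e^{-cz} exp(zA) B`. Here `S₊, S₋` are eigenvectors of
`ad S₃` and `S₃ ± (i/2)(S₊ + S₋)` of `ad S₂`, with eigenvalues `±1`. For matrices this is applied
with the operator norm and transferred entrywise to the norm of the statement.
-/

open Matrix Complex

/-- Spin operator `S₃` for `2s = n`: diagonal with entries `j - n/2`. -/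
noncomputable def S3 (n : ℕ) : Matrix (Fin (n+1)) (Fin (n+1)) ℂ :=
  Matrix.diagonal fun j => (j : ℂ) - (n : ℂ) / 2

/-- Raising operator `S₊`: `(S₊)_{k+1,k} = √((k+1)(n-k))`. -/
noncomputable def Sp (n : ℕ) : Matrix (Fin (n+1)) (Fin (n+1)) ℂ :=
  Matrix.of fun j k =>
    if (j : ℕ) = (k : ℕ) + 1 then (Real.sqrt (((k : ℕ) + 1) * (n - (k : ℕ))) : ℂ) else 0

/-- Lowering operator `S₋ = S₊ᴴ`. -/
noncomputable def Sm (n : ℕ) : Matrix (Fin (n+1)) (Fin (n+1)) ℂ := (Sp n)ᴴ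

/-- `S₂ = (S₊ - S₋)/(2i)`. -/
noncomputable def S2 (n : ℕ) : Matrix (Fin (n+1)) (Fin (n+1)) ℂ :=
  (2 * Complex.I)⁻¹ • (Sp n - Sm n)

attribute [local instance] Matrix.normedAddCommGroup Matrix.normedSpace

/-- Rotation matrix `R(φ,θ,ψ) = exp(-iφS₃)·exp(-iθS₂)·exp(-iψS₃)`. -/
noncomputable def Rot (n : ℕ) (φ θ ψ : ℝ) : Matrix (Fin (n+1)) (Fin (n+1)) ℂ :=
  NormedSpace.exp ((-Complex.I * (φ : ℂ)) • S3 n) *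
    NormedSpace.exp ((-Complex.I * (θ : ℂ)) • S2 n) *
      NormedSpace.exp ((-Complex.I * (ψ : ℂ)) • S3 n)

open NormedSpace

section ExpSmul

variable {𝔸 : Type*} [NormedRing 𝔸] [NormedAlgebra ℂ 𝔸] [CompleteSpace 𝔸]

theorem mul_exp_smul_of_lie_eq_smul {A B : 𝔸} {c : ℂ} (h : ⁅A, B⁆ = c • B) (z : ℂ) :
    B * exp (z • A) = Complex.exp (-(c * z)) • (exp (z • A) * B) := by
  let _ : NormedAlgebra ℚ 𝔸 := NormedAlgebra.restrictScalars ℚ ℂ 𝔸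
  have hsemi : SemiconjBy B (z • A + algebraMap ℂ 𝔸 (c * z)) (z • A) := by
    rw [Ring.lie_def, sub_eq_iff_eq_add] at h
    simp only [SemiconjBy, mul_add, mul_smul_comm, smul_mul_assoc, h,
      Algebra.algebraMap_eq_smul_one, mul_one, smul_add, smul_smul]
    module
  have hexp := hsemi.exp_right.eq
  rw [NormedSpace.exp_add_of_commute (Algebra.commutes _ _).symm, ← algebraMap_exp_comm,
    ← Complex.exp_eq_exp_ℂ, ← mul_assoc, ← Algebra.commutes, ← Algebra.smul_def] at hexp
  rw [← hexp, smul_smul, ← Complex.exp_add, neg_add_cancel, Complex.exp_zero, one_smul]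

theorem HasDerivAt.exp_smul_const {g : ℝ → ℂ} {g' : ℂ} {t : ℝ} (hg : HasDerivAt g g' t)
    (A : 𝔸) :
    HasDerivAt (fun t => NormedSpace.exp (g t • A)) (g' • (NormedSpace.exp (g t • A) * A)) t :=
  (hasDerivAt_exp_smul_const A (g t)).scomp t hg

end ExpSmul

/-- Unlike `IsSl2Triple` (with `h = 2 • s3`), `s3 = 0` is allowed: this covers spin `0`. -/
structure IsSpinTriple {𝔸 : Type*} [Ring 𝔸] (s3 sp sm : 𝔸) : Prop where
  lie_s3_sp : ⁅s3, sp⁆ = sp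
  lie_s3_sm : ⁅s3, sm⁆ = -sm
  lie_sp_sm : ⁅sp, sm⁆ = 2 • s3

noncomputable def eulerRotation {𝔸 : Type*} [NormedRing 𝔸] [NormedAlgebra ℂ 𝔸] (s3 s2 : 𝔸)
    (φ θ ψ : ℝ) : 𝔸 :=
  exp ((-I * φ) • s3) * exp ((-I * θ) • s2) * exp ((-I * ψ) • s3)

namespace IsSpinTriple

section Lie

attribute [local instance] LieRing.ofAssociativeRing

variable {𝔸 : Type*} [Ring 𝔸] {s3 sp sm : 𝔸}

theorem lie_sp_s3 (h : IsSpinTriple s3 sp sm) : ⁅sp, s3⁆ = -sp := by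
  rw [← lie_skew, h.lie_s3_sp]

theorem lie_sm_s3 (h : IsSpinTriple s3 sp sm) : ⁅sm, s3⁆ = sm := by
  rw [← lie_skew, h.lie_s3_sm, neg_neg]

theorem lie_sm_sp (h : IsSpinTriple s3 sp sm) : ⁅sm, sp⁆ = -(2 • s3) := by
  rw [← lie_skew, h.lie_sp_sm]

variable [Algebra ℂ 𝔸]

theorem lie_s2_add (h : IsSpinTriple s3 sp sm) :
    ⁅(2 * I)⁻¹ • (sp - sm), s3 + (I / 2) • (sp + sm)⁆ = s3 + (I / 2) • (sp + sm) := by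
  simp only [lie_add, lie_smul, smul_lie, sub_lie, h.lie_sp_s3, h.lie_sm_s3, h.lie_sm_sp,
    h.lie_sp_sm, lie_self, mul_inv, inv_I]
  match_scalars <;> grind [I_sq]

theorem lie_s2_sub (h : IsSpinTriple s3 sp sm) :
    ⁅(2 * I)⁻¹ • (sp - sm), s3 - (I / 2) • (sp + sm)⁆ = -(s3 - (I / 2) • (sp + sm)) := by
  simp only [lie_add, lie_sub, lie_smul, smul_lie, sub_lie, h.lie_sp_s3, h.lie_sm_s3, h.lie_sm_sp,
    h.lie_sp_sm, lie_self, mul_inv, inv_I]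
  match_scalars <;> grind [I_sq]

end Lie

variable {𝔸 : Type*} [NormedRing 𝔸] [NormedAlgebra ℂ 𝔸] [CompleteSpace 𝔸] {s3 sp sm : 𝔸}

theorem sp_mul_exp_smul_s3 (h : IsSpinTriple s3 sp sm) (x : ℝ) :
    sp * exp ((-I * x) • s3) = Complex.exp (I * x) • (exp ((-I * x) • s3) * sp) := by
  convert mul_exp_smul_of_lie_eq_smul (c := 1) (by rw [h.lie_s3_sp, one_smul]) (-I * x) using 3
  ring

theorem sm_mul_exp_smul_s3 (h : IsSpinTriple s3 sp sm) (x : ℝ) :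
    sm * exp ((-I * x) • s3) = Complex.exp (-(I * x)) • (exp ((-I * x) • s3) * sm) := by
  convert mul_exp_smul_of_lie_eq_smul (c := -1) (by rw [h.lie_s3_sm, neg_one_smul]) (-I * x)
    using 3
  ring

theorem s2_mul_exp_smul_s3 (h : IsSpinTriple s3 sp sm) (x : ℝ) :
    (2 * I)⁻¹ • (sp - sm) * exp ((-I * x) • s3) =
      exp ((-I * x) • s3) *
        (2 * I)⁻¹ • (Complex.exp (I * x) • sp - Complex.exp (-(I * x)) • sm) := by
  rw [smul_mul_assoc, sub_mul, h.sp_mul_exp_smul_s3, h.sm_mul_exp_smul_s3, mul_smul_comm, mul_sub,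
    mul_smul_comm, mul_smul_comm]

theorem s3_mul_exp_smul_s2 (h : IsSpinTriple s3 sp sm) (x : ℝ) :
    s3 * exp ((-I * x) • (2 * I)⁻¹ • (sp - sm)) =
      exp ((-I * x) • (2 * I)⁻¹ • (sp - sm)) *
        ((Real.cos x : ℂ) • s3 - (Real.sin x / 2 : ℂ) • (sp + sm)) := by
  have hP := mul_exp_smul_of_lie_eq_smul (c := 1) (by rw [h.lie_s2_add, one_smul]) (-I * x)
  have hQ := mul_exp_smul_of_lie_eq_smul (c := -1) (by rw [h.lie_s2_sub, neg_one_smul]) (-I * x)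
  rw [show -(1 * (-I * x)) = x * I by ring, exp_mul_I] at hP
  rw [show -(-1 * (-I * x)) = (-x : ℝ) * I by push_cast; ring, exp_mul_I] at hQ
  have hs3 : s3 = (1 / 2 : ℂ) • ((s3 + (I / 2) • (sp + sm)) + (s3 - (I / 2) • (sp + sm))) := by
    module
  rw [hs3, smul_mul_assoc, add_mul, hP, hQ]
  simp only [mul_add, mul_sub, mul_smul_comm, ofReal_neg, Complex.cos_neg, Complex.sin_neg,
    ofReal_cos, ofReal_sin]
  match_scalars <;> grind [I_sq]

theorem s3_mul_exp_smul_s2_mul_exp_smul_s3 (h : IsSpinTriple s3 sp sm) (θ ψ : ℝ) :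
    s3 * (exp ((-I * θ) • (2 * I)⁻¹ • (sp - sm)) * exp ((-I * ψ) • s3)) =
      exp ((-I * θ) • (2 * I)⁻¹ • (sp - sm)) * (exp ((-I * ψ) • s3) *
        ((Real.cos θ : ℂ) • s3 -
          (Real.sin θ / 2 : ℂ) • (Complex.exp (I * ψ) • sp + Complex.exp (-(I * ψ)) • sm))) := by
  rw [← mul_assoc, h.s3_mul_exp_smul_s2, mul_assoc, sub_mul, smul_mul_assoc, smul_mul_assoc,
    add_mul, ((Commute.refl s3).smul_right _).exp_right.eq, h.sp_mul_exp_smul_s3,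
    h.sm_mul_exp_smul_s3]
  simp only [mul_sub, mul_add, mul_smul_comm]

theorem hasDerivAt_eulerRotation (h : IsSpinTriple s3 sp sm) {φ θ ψ : ℝ → ℝ} {φ' θ' ψ' t₀ : ℝ}
    (hφ : HasDerivAt φ φ' t₀) (hθ : HasDerivAt θ θ' t₀) (hψ : HasDerivAt ψ ψ' t₀) :
    HasDerivAt (fun t => eulerRotation s3 ((2 * I)⁻¹ • (sp - sm)) (φ t) (θ t) (ψ t))
      (eulerRotation s3 ((2 * I)⁻¹ • (sp - sm)) (φ t₀) (θ t₀) (ψ t₀) *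
        ((-I * ((φ' * Real.cos (θ t₀) + ψ' : ℝ) : ℂ)) • s3 +
          ((1 / 2 : ℂ) * (I * φ' * Real.sin (θ t₀) - θ') * Complex.exp (I * ψ t₀)) • sp +
          ((1 / 2 : ℂ) * (I * φ' * Real.sin (θ t₀) + θ') * Complex.exp (-(I * ψ t₀))) • sm))
      t₀ := by
  -- the real structure has to be the restriction of the complex one, as in the statement
  let _ : NormedAlgebra ℝ 𝔸 := NormedAlgebra.restrictScalars ℝ ℂ 𝔸
  have hE : ∀ {f : ℝ → ℝ} {f' : ℝ}, HasDerivAt f f' t₀ → ∀ A : 𝔸,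
      HasDerivAt (fun t => exp ((-I * f t) • A)) ((-I * f') • (exp ((-I * f t₀) • A) * A)) t₀ :=
    fun hf A => (hf.ofReal_comp.const_mul (-I)).exp_smul_const A
  refine (((hE hφ s3).mul (hE hθ _)).mul (hE hψ s3)).congr_deriv ?_
  simp only [Pi.mul_apply]
  have hW := h.s3_mul_exp_smul_s2_mul_exp_smul_s3 (θ t₀) (ψ t₀)
  have hV := h.s2_mul_exp_smul_s3 (ψ t₀)
  set E₁ := exp ((-I * φ t₀) • s3)
  set E₂ := exp ((-I * θ t₀) • (2 * I)⁻¹ • (sp - sm))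
  set E₃ := exp ((-I * ψ t₀) • s3)
  set W := (Real.cos (θ t₀) : ℂ) • s3 -
    (Real.sin (θ t₀) / 2 : ℂ) • (Complex.exp (I * ψ t₀) • sp + Complex.exp (-(I * ψ t₀)) • sm)
  set V := (2 * I)⁻¹ • (Complex.exp (I * ψ t₀) • sp - Complex.exp (-(I * ψ t₀)) • sm)
  calc _ = E₁ * (E₂ * (E₃ * ((-I * φ') • W + (-I * θ') • V + (-I * ψ') • s3))) := by
        simp only [mul_assoc, add_mul, smul_mul_assoc, hW, hV]
        simp only [mul_add, mul_smul_comm]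
    _ = _ := by
        simp only [eulerRotation, mul_assoc]
        congr 3
        simp only [W, V]
        match_scalars <;> grind [I_sq, inv_I, mul_inv]

end IsSpinTriple

theorem Matrix.lie_diagonal_apply {ι α : Type*} [Fintype ι] [DecidableEq ι] [CommRing α]
    (d : ι → α) (A : Matrix ι ι α) (i j : ι) : ⁅diagonal d, A⁆ i j = (d i - d j) * A i j := by
  rw [Ring.lie_def, sub_apply, diagonal_mul, mul_diagonal, sub_mul, mul_comm (A i j)]

theorem Fin.sum_ite_val_eq {M : Type*} [AddCommMonoid M] {n : ℕ} (m : ℕ) (f : Fin n → M) :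
    ∑ l : Fin n, (if (l : ℕ) = m then f l else 0) = if h : m < n then f ⟨m, h⟩ else 0 := by
  split_ifs with h
  · simpa [Fin.ext_iff] using Fintype.sum_ite_eq' (⟨m, h⟩ : Fin n) f
  · exact Finset.sum_eq_zero fun l _ => if_neg (by omega)

theorem Sm_apply (n : ℕ) (j k : Fin (n + 1)) :
    Sm n j k = if (k : ℕ) = j + 1 then (Real.sqrt (((j : ℕ) + 1) * (n - (j : ℕ))) : ℂ) else 0 := by
  simp only [Sm, Sp, conjTranspose_apply, of_apply]
  split_ifs <;> simp [Complex.conj_ofReal]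

theorem sq_ofReal_sqrt_succ_mul_sub {n k : ℕ} (hk : k ≤ n) :
    (Real.sqrt ((k + 1) * (n - k)) : ℂ) ^ 2 = (k + 1) * (n - k) := by
  have : (k : ℝ) ≤ n := by exact_mod_cast hk
  rw [← ofReal_pow, Real.sq_sqrt (by nlinarith)]
  push_cast; ring

theorem Sm_mul_Sp (n : ℕ) :
    Sm n * Sp n = diagonal fun j : Fin (n + 1) => (((j : ℕ) : ℂ) + 1) * (n - (j : ℕ)) := by
  ext j k
  simp only [mul_apply, Sm_apply, Sp, of_apply, ite_mul, zero_mul, Fin.sum_ite_val_eq]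
  rcases eq_or_ne j k with rfl | hjk
  · simp only [diagonal_apply_eq, ↓reduceIte]
    split_ifs with h
    · rw [← sq, sq_ofReal_sqrt_succ_mul_sub (by omega)]
    · simp [show (j : ℕ) = n by omega]
  · simp [diagonal_apply_ne _ hjk, Fin.val_ne_of_ne hjk]

theorem Sp_mul_Sm (n : ℕ) :
    Sp n * Sm n = diagonal fun j : Fin (n + 1) => ((j : ℕ) : ℂ) * (n + 1 - (j : ℕ)) := by
  ext j k
  rcases Nat.eq_zero_or_pos j with hj | hj
  · simp [mul_apply, Sp, hj, diagonal_apply]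
  have hcond : ∀ l : Fin (n + 1), (j : ℕ) = l + 1 ↔ (l : ℕ) = j - 1 := fun l => by omega
  simp only [mul_apply, Sm_apply, Sp, of_apply, hcond, ite_mul, zero_mul, Fin.sum_ite_val_eq]
  rw [dif_pos (by omega)]
  rcases eq_or_ne j k with rfl | hjk
  · rw [if_pos (by omega), diagonal_apply_eq, ← sq, sq_ofReal_sqrt_succ_mul_sub (by omega)]
    push_cast [Nat.cast_sub (Nat.one_le_iff_ne_zero.mpr hj.ne')]
    ring
  · rw [if_neg (by omega), diagonal_apply_ne _ hjk, mul_zero]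

theorem lie_S3_Sp (n : ℕ) : ⁅S3 n, Sp n⁆ = Sp n := by
  ext j k
  rw [S3, lie_diagonal_apply, Sp, of_apply]
  split_ifs with h <;> simp [h]

theorem lie_S3_Sm (n : ℕ) : ⁅S3 n, Sm n⁆ = -Sm n := by
  ext j k
  rw [S3, lie_diagonal_apply, Sm_apply, neg_apply, Sm_apply]
  split_ifs with h <;> simp [h]

theorem lie_Sp_Sm (n : ℕ) : ⁅Sp n, Sm n⁆ = 2 • S3 n := by
  rw [Ring.lie_def, Sp_mul_Sm, Sm_mul_Sp, S3, diagonal_sub]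
  ext j k
  rcases eq_or_ne j k with rfl | hjk
  · simp only [diagonal_apply_eq, Matrix.smul_apply, nsmul_eq_mul]
    push_cast; ring
  · simp [diagonal_apply_ne _ hjk]

theorem isSpinTriple_S3_Sp_Sm (n : ℕ) : IsSpinTriple (S3 n) (Sp n) (Sm n) :=
  ⟨lie_S3_Sp n, lie_S3_Sm n, lie_Sp_Sm n⟩

-- `h` is for the operator norm, the conclusion for the entrywise sup norm made a local instance
-- above.
theorem Matrix.hasDerivAt_of_linftyOp {m : Type*} [Fintype m] {F : ℝ → Matrix m m ℂ}
    {D : Matrix m m ℂ} {t : ℝ} (h : open scoped Matrix.Norms.Operator in HasDerivAt F D t) :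
    HasDerivAt F D t := by
  open scoped Matrix.Norms.Operator in
  refine hasDerivAt_pi.2 fun i => hasDerivAt_pi.2 fun j => ?_
  exact ((entryLinearMap ℝ ℂ i j).toContinuousLinearMap.hasFDerivAt).comp_hasDerivAt t h

/-- Derivative identity for a rotating frame: `d/dt R(Ω(t)) = R(Ω(t₀)) · M` at
`t₀`, where
`M = -i(φ' cos θ + ψ')S₃ + ½(iφ' sin θ - θ')e^{iψ}S₊ + ½(iφ' sin θ + θ')e^{-iψ}S₋`
(all functions evaluated at `t₀`). -/
theorem rotating_frame_derivative (n : ℕ) (φ θ ψ : ℝ → ℝ) (t₀ : ℝ)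
    (hφ : DifferentiableAt ℝ φ t₀) (hθ : DifferentiableAt ℝ θ t₀)
    (hψ : DifferentiableAt ℝ ψ t₀) :
    HasDerivAt (fun t => Rot n (φ t) (θ t) (ψ t))
      (Rot n (φ t₀) (θ t₀) (ψ t₀) *
        ((-Complex.I * ((deriv φ t₀ * Real.cos (θ t₀) + deriv ψ t₀ : ℝ) : ℂ)) • S3 n +
          ((1 / 2 : ℂ) *
              (Complex.I * ((deriv φ t₀ : ℝ) : ℂ) * ((Real.sin (θ t₀) : ℝ) : ℂ) -
                ((deriv θ t₀ : ℝ) : ℂ)) *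
              Complex.exp (Complex.I * ((ψ t₀ : ℝ) : ℂ))) • Sp n +
          ((1 / 2 : ℂ) *
              (Complex.I * ((deriv φ t₀ : ℝ) : ℂ) * ((Real.sin (θ t₀) : ℝ) : ℂ) +
                ((deriv θ t₀ : ℝ) : ℂ)) *
              Complex.exp (-(Complex.I * ((ψ t₀ : ℝ) : ℂ)))) • Sm n)) t₀ := by
  have key := open scoped Matrix.Norms.Operator in
    (isSpinTriple_S3_Sp_Sm n).hasDerivAt_eulerRotation hφ.hasDerivAt hθ.hasDerivAt hψ.hasDerivAt
  exact Matrix.hasDerivAt_of_linftyOp key
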